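/- arXiv:1905.13109 — 3 statements merged into one kernel-verified Lean document; each statement's English description precedes it below -/
import Mathlib

section
/- Let p be a prime, j,k ≥ 1 integers, and s, s', m, m' integers coprime to p. Define C_p = Σ_{γ mod p^{j+k}} S(m̄s̄, γs̄; p^j) · S(m̄'s̄', γs̄'; p^k) · e(s̄s̄'n₂γ / p^{j+k}), where S(a,b;q) denotes the Kloosterman sum and bars denote multiplicative inverses modulo the respective prime powers. Then C_p = 0 unless gcd(p^j, p^k) divides n₂, and in that case |C_p| ≤ p^{j+k} · gcd(p^j, p^k, n₂). -/
open scoped BigOperators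

/-- `e t = exp(2πit)`. -/
noncomputable def eAdd (t : ℝ) : ℂ := Complex.exp (2 * Real.pi * Complex.I * t)

/-- Kloosterman sum `S(a,b;q) = Σ*_{x mod q} e((ax + b x̄)/q)`, the star indicating that
`x` runs over residues coprime to `q`, and `x̄` the inverse of `x` mod `q`. -/
noncomputable def kloosterman (q : ℕ) (a b : ZMod q) : ℂ :=
  ∑ x ∈ Finset.filter (fun x => Nat.Coprime x q) (Finset.range q),
    eAdd ((((a * (x : ZMod q) + b * ((x : ZMod q))⁻¹).val : ℕ) : ℝ) / q)

/-!
Writing both Kloosterman sums out and summing over `γ` first, orthogonality of the additive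
characters mod `Q = p^(j+k)` leaves `Q` times a sum of unimodular terms over the pairs of units
`(x, y)` with `p^k · s̄x̄ + p^j · s̄'ȳ + s̄s̄'n₂ ≡ 0 (mod Q)`. Reducing this congruence modulo
`gcd(p^j, p^k)` shows that `gcd(p^j, p^k) ∣ n₂` if there is any such pair; and since it fixes
`ȳ mod p^k` once `x` is chosen (and `x̄ mod p^j` once `y` is), there are at most
`min(p^j, p^k) = gcd(p^j, p^k)` of them.
-/

open Finset ZMod

lemma eAdd_val_div_eq_stdAddChar {N : ℕ} [NeZero N] (u : ZMod N) :
    eAdd ((u.val : ℝ) / N) = stdAddChar u := by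
  rw [stdAddChar_apply, toCircle_apply, eAdd]
  push_cast
  ring_nf

def coprimeResidues (q : ℕ) : Finset ℕ := {x ∈ range q | x.Coprime q}

lemma card_coprimeResidues_le (q : ℕ) : #(coprimeResidues q) ≤ q :=
  (card_filter_le _ _).trans (card_range q).le

lemma kloosterman_eq_sum_stdAddChar {q : ℕ} [NeZero q] (a b : ZMod q) :
    kloosterman q a b = ∑ x ∈ coprimeResidues q,
      stdAddChar (a * (x : ZMod q)) * stdAddChar (b * (x : ZMod q)⁻¹) := by
  simp only [kloosterman, coprimeResidues, eAdd_val_div_eq_stdAddChar, AddChar.map_add_eq_mul]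

lemma sum_range_stdAddChar_natCast_mul {N : ℕ} [NeZero N] (t : ZMod N) :
    ∑ γ ∈ range N, stdAddChar ((γ : ZMod N) * t) = if t = 0 then (N : ℂ) else 0 := by
  simp only [← nsmul_eq_mul, AddChar.map_nsmul_eq_pow stdAddChar]
  split_ifs with ht
  · simp [ht]
  · have hne : stdAddChar t ≠ 1 := by
      rwa [← (stdAddChar (N := N)).map_zero_eq_one, injective_stdAddChar.ne_iff]
    rw [geom_sum_eq hne, ← AddChar.map_nsmul_eq_pow stdAddChar, nsmul_eq_mul, natCast_self,
      zero_mul, AddChar.map_zero_eq_one, sub_self, zero_div]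

lemma norm_sum_stdAddChar_mul_stdAddChar_le {q₁ q₂ : ℕ} [NeZero q₁] [NeZero q₂]
    (a₁ : ZMod q₁) (a₂ : ZMod q₂) (s : Finset (ℕ × ℕ)) :
    ‖∑ z ∈ s, stdAddChar (a₁ * (z.1 : ZMod q₁)) * stdAddChar (a₂ * (z.2 : ZMod q₂))‖ ≤ #s := by
  refine (norm_sum_le _ _).trans ?_
  simp [AddChar.norm_apply]

lemma injOn_mul_inv_natCast {q : ℕ} {w : ZMod q} (hw : IsUnit w) :
    Set.InjOn (fun x : ℕ => w * (x : ZMod q)⁻¹) (coprimeResidues q) := by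
  intro x hx y hy hxy
  simp only [coprimeResidues, mem_coe, mem_filter, mem_range] at hx hy
  have hinv := hw.mul_left_cancel hxy
  rw [← coe_unitOfCoprime x hx.2, ← coe_unitOfCoprime y hy.2, inv_coe_unit, inv_coe_unit,
    Units.val_inj, inv_inj, ← Units.val_inj, coe_unitOfCoprime, coe_unitOfCoprime,
    natCast_eq_natCast_iff'] at hinv
  rwa [Nat.mod_eq_of_lt hx.1, Nat.mod_eq_of_lt hy.1] at hinv

lemma isUnit_inv_intCast_pow {s : ℤ} {p : ℕ} (hs : IsCoprime s p) (n : ℕ) :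
    IsUnit (s : ZMod (p ^ n))⁻¹ :=
  isUnit_inv ((coe_int_isUnit_iff_isCoprime s _).2 (by exact_mod_cast (hs.pow_right (n := n)).symm))

section

variable {q₁ q₂ Q : ℕ}

lemma stdAddChar_natCast_mul_natCast [NeZero q₁] [NeZero Q] (hQ : q₁ * q₂ = Q) (v : ℕ) :
    stdAddChar ((q₂ : ZMod Q) * (v : ZMod Q)) = stdAddChar (v : ZMod q₁) := by
  have hq₂ : (q₂ : ℂ) ≠ 0 := by
    exact_mod_cast right_ne_zero_of_mul (hQ ▸ NeZero.ne Q)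
  rw [stdAddChar_apply, stdAddChar_apply, ← Nat.cast_mul, toCircle_natCast, toCircle_natCast,
    ← hQ]
  push_cast
  field_simp

lemma natCast_mul_val_injective [NeZero q₂] (hq₁ : q₁ ≠ 0) (hQ : q₁ * q₂ = Q) :
    Function.Injective fun v : ZMod q₂ => (q₁ : ZMod Q) * (v.val : ZMod Q) := by
  intro u v huv
  subst hQ
  simp only [← Nat.cast_mul, natCast_eq_natCast_iff] at huv
  exact val_injective _ ((Nat.ModEq.mul_left_cancel' hq₁ huv).eq_of_lt_of_lt u.val_lt v.val_lt)

def kloostermanPhase (q₁ q₂ Q : ℕ) (w₁ : ZMod q₁) (w₂ : ZMod q₂) (D : ZMod Q) (x y : ℕ) :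
    ZMod Q :=
  q₂ * ((w₁ * (x : ZMod q₁)⁻¹).val : ZMod Q) + q₁ * ((w₂ * (y : ZMod q₂)⁻¹).val : ZMod Q) + D

def kloostermanSolutions (q₁ q₂ Q : ℕ) (w₁ : ZMod q₁) (w₂ : ZMod q₂) (D : ZMod Q) :
    Finset (ℕ × ℕ) :=
  {z ∈ coprimeResidues q₁ ×ˢ coprimeResidues q₂ | kloostermanPhase q₁ q₂ Q w₁ w₂ D z.1 z.2 = 0}

lemma stdAddChar_mul_stdAddChar_mul_stdAddChar [NeZero q₁] [NeZero q₂] [NeZero Q]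
    (hQ : q₁ * q₂ = Q) (w₁ : ZMod q₁) (w₂ : ZMod q₂) (D : ZMod Q) (γ x y : ℕ) :
    stdAddChar ((γ : ZMod q₁) * (w₁ * (x : ZMod q₁)⁻¹))
        * stdAddChar ((γ : ZMod q₂) * (w₂ * (y : ZMod q₂)⁻¹)) * stdAddChar (D * (γ : ZMod Q))
      = stdAddChar ((γ : ZMod Q) * kloostermanPhase q₁ q₂ Q w₁ w₂ D x y) := by
  have h₁ := stdAddChar_natCast_mul_natCast hQ (γ * (w₁ * (x : ZMod q₁)⁻¹).val)
  have h₂ := stdAddChar_natCast_mul_natCast ((mul_comm q₂ q₁).trans hQ)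
    (γ * (w₂ * (y : ZMod q₂)⁻¹).val)
  simp only [Nat.cast_mul, natCast_zmod_val] at h₁ h₂
  rw [← h₁, ← h₂, ← AddChar.map_add_eq_mul, ← AddChar.map_add_eq_mul, kloostermanPhase]
  ring_nf

theorem sum_kloosterman_mul_kloosterman_mul_eAdd [NeZero q₁] [NeZero q₂]
    (hQ : q₁ * q₂ = Q) (a₁ w₁ : ZMod q₁) (a₂ w₂ : ZMod q₂) (D : ZMod Q) :
    ∑ γ ∈ range Q, kloosterman q₁ a₁ ((γ : ZMod q₁) * w₁)
        * kloosterman q₂ a₂ ((γ : ZMod q₂) * w₂) * eAdd (((D * (γ : ZMod Q)).val : ℝ) / Q)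
      = Q * ∑ z ∈ kloostermanSolutions q₁ q₂ Q w₁ w₂ D,
          stdAddChar (a₁ * (z.1 : ZMod q₁)) * stdAddChar (a₂ * (z.2 : ZMod q₂)) := by
  have : NeZero Q := ⟨hQ ▸ NeZero.ne _⟩
  calc _ = ∑ γ ∈ range Q, ∑ x ∈ coprimeResidues q₁, ∑ y ∈ coprimeResidues q₂,
        stdAddChar (a₁ * (x : ZMod q₁)) * stdAddChar (a₂ * (y : ZMod q₂))
          * stdAddChar ((γ : ZMod Q) * kloostermanPhase q₁ q₂ Q w₁ w₂ D x y) := by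
        refine sum_congr rfl fun γ _ => ?_
        simp only [kloosterman_eq_sum_stdAddChar, eAdd_val_div_eq_stdAddChar]
        rw [sum_mul_sum, sum_mul]
        refine sum_congr rfl fun x _ => ?_
        rw [sum_mul]
        refine sum_congr rfl fun y _ => ?_
        rw [← stdAddChar_mul_stdAddChar_mul_stdAddChar hQ, mul_assoc (γ : ZMod q₁),
          mul_assoc (γ : ZMod q₂)]
        ring
    _ = ∑ x ∈ coprimeResidues q₁, ∑ y ∈ coprimeResidues q₂,
        stdAddChar (a₁ * (x : ZMod q₁)) * stdAddChar (a₂ * (y : ZMod q₂))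
          * if kloostermanPhase q₁ q₂ Q w₁ w₂ D x y = 0 then (Q : ℂ) else 0 := by
        rw [sum_comm]
        refine sum_congr rfl fun x _ => ?_
        rw [sum_comm]
        simp only [← mul_sum, sum_range_stdAddChar_natCast_mul]
    _ = _ := by
        conv_rhs => rw [kloostermanSolutions, sum_filter, sum_product, mul_sum]
        simp only [mul_sum, mul_ite, mul_zero]
        refine sum_congr rfl fun x _ => sum_congr rfl fun y _ => ?_
        split_ifs <;> ring

lemma card_kloostermanSolutions_le_left [NeZero q₂] (hq₁ : q₁ ≠ 0) (hQ : q₁ * q₂ = Q)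
    (w₁ : ZMod q₁) {w₂ : ZMod q₂} (hw₂ : IsUnit w₂) (D : ZMod Q) :
    #(kloostermanSolutions q₁ q₂ Q w₁ w₂ D) ≤ q₁ := by
  calc _ ≤ #(coprimeResidues q₁) := by
        refine card_le_card_of_injOn Prod.fst (fun z hz => ?_) fun z hz z' hz' hzz' => ?_
        · exact (mem_product.1 (mem_filter.1 hz).1).1
        · simp only [kloostermanSolutions, mem_coe, mem_filter, mem_product] at hz hz'
          rw [← hz'.2, hzz', kloostermanPhase, kloostermanPhase, add_left_inj, add_right_inj] at hz
          exact Prod.ext hzz' (injOn_mul_inv_natCast hw₂ hz.1.2 hz'.1.2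
            (natCast_mul_val_injective hq₁ hQ hz.2))
    _ ≤ q₁ := card_coprimeResidues_le q₁

lemma card_kloostermanSolutions_le_right [NeZero q₁] (hq₂ : q₂ ≠ 0) (hQ : q₁ * q₂ = Q)
    {w₁ : ZMod q₁} (hw₁ : IsUnit w₁) (w₂ : ZMod q₂) (D : ZMod Q) :
    #(kloostermanSolutions q₁ q₂ Q w₁ w₂ D) ≤ q₂ := by
  calc _ ≤ #(coprimeResidues q₂) := by
        refine card_le_card_of_injOn Prod.snd (fun z hz => ?_) fun z hz z' hz' hzz' => ?_
        · exact (mem_product.1 (mem_filter.1 hz).1).2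
        · simp only [kloostermanSolutions, mem_coe, mem_filter, mem_product] at hz hz'
          rw [← hz'.2, hzz', kloostermanPhase, kloostermanPhase, add_left_inj, add_left_inj] at hz
          exact Prod.ext (injOn_mul_inv_natCast hw₁ hz.1.1 hz'.1.1
            (natCast_mul_val_injective hq₂ ((mul_comm q₂ q₁).trans hQ) hz.2)) hzz'
    _ ≤ q₂ := card_coprimeResidues_le q₂

lemma gcd_dvd_of_mem_kloostermanSolutions (hQ : q₁ * q₂ = Q) {w₁ : ZMod q₁} {w₂ : ZMod q₂}
    {u v : ZMod Q} (hu : IsUnit u) (hv : IsUnit v) {n : ℤ} {z : ℕ × ℕ}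
    (hz : z ∈ kloostermanSolutions q₁ q₂ Q w₁ w₂ (u * v * n)) : (Nat.gcd q₁ q₂ : ℤ) ∣ n := by
  have hgQ : Nat.gcd q₁ q₂ ∣ Q := hQ ▸ (Nat.gcd_dvd_left _ _).trans (dvd_mul_right _ _)
  have h := congrArg (castHom hgQ (ZMod (Nat.gcd q₁ q₂))) (mem_filter.1 hz).2
  simp only [kloostermanPhase, map_add, map_mul, map_natCast, map_intCast, map_zero,
    (natCast_eq_zero_iff _ _).2 (Nat.gcd_dvd_left q₁ q₂),
    (natCast_eq_zero_iff _ _).2 (Nat.gcd_dvd_right q₁ q₂), zero_mul, zero_add] at h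
  rwa [mul_assoc, (hu.map _).mul_right_eq_zero, (hv.map _).mul_right_eq_zero,
    intCast_zmod_eq_zero_iff_dvd] at h

end

lemma card_kloostermanSolutions_le_gcd_pow {p j k : ℕ} (hp₀ : p ≠ 0) {w₁ : ZMod (p ^ j)}
    {w₂ : ZMod (p ^ k)} (hw₁ : IsUnit w₁) (hw₂ : IsUnit w₂) (D : ZMod (p ^ (j + k))) :
    #(kloostermanSolutions (p ^ j) (p ^ k) (p ^ (j + k)) w₁ w₂ D) ≤ Nat.gcd (p ^ j) (p ^ k) := by
  have : NeZero (p ^ j) := ⟨pow_ne_zero j hp₀⟩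
  have : NeZero (p ^ k) := ⟨pow_ne_zero k hp₀⟩
  rcases le_total j k with hjk | hkj
  · rw [Nat.gcd_eq_left (pow_dvd_pow p hjk)]
    exact card_kloostermanSolutions_le_left (pow_ne_zero j hp₀) (pow_add p j k).symm _ hw₂ _
  · rw [Nat.gcd_eq_right (pow_dvd_pow p hkj)]
    exact card_kloostermanSolutions_le_right (pow_ne_zero k hp₀) (pow_add p j k).symm hw₁ _ _

theorem character_sum_prime_power_general
    (p : ℕ) (hp : p.Prime) (j k : ℕ)
    (s s' m m' n₂ : ℤ)
    (hs : IsCoprime s (p : ℤ)) (hs' : IsCoprime s' (p : ℤ))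
    (C : ℂ)
    (hC : C = ∑ γ ∈ Finset.range (p ^ (j + k)),
      kloosterman (p ^ j) (((m : ZMod (p ^ j)))⁻¹ * ((s : ZMod (p ^ j)))⁻¹)
        ((γ : ZMod (p ^ j)) * ((s : ZMod (p ^ j)))⁻¹)
      * kloosterman (p ^ k) (((m' : ZMod (p ^ k)))⁻¹ * ((s' : ZMod (p ^ k)))⁻¹)
        ((γ : ZMod (p ^ k)) * ((s' : ZMod (p ^ k)))⁻¹)
      * eAdd (((((s : ZMod (p ^ (j + k))))⁻¹ * ((s' : ZMod (p ^ (j + k))))⁻¹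
          * (n₂ : ZMod (p ^ (j + k))) * (γ : ZMod (p ^ (j + k)))).val : ℝ) / (p ^ (j + k)))) :
    (¬ ((Nat.gcd (p ^ j) (p ^ k) : ℤ) ∣ n₂) → C = 0) ∧
    ‖C‖ ≤ (p : ℝ) ^ (j + k) * (Int.gcd (Int.gcd ((p : ℤ) ^ j) ((p : ℤ) ^ k)) n₂) := by
  have hp₀ := hp.ne_zero
  have : NeZero (p ^ j) := ⟨pow_ne_zero j hp₀⟩
  have : NeZero (p ^ k) := ⟨pow_ne_zero k hp₀⟩
  have hQ : p ^ j * p ^ k = p ^ (j + k) := (pow_add p j k).symm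
  rw [← Nat.cast_pow, sum_kloosterman_mul_kloosterman_mul_eAdd hQ] at hC
  set T := kloostermanSolutions (p ^ j) (p ^ k) (p ^ (j + k)) _ _ _
  set g := Nat.gcd (p ^ j) (p ^ k)
  have hT : ∀ z ∈ T, (g : ℤ) ∣ n₂ := fun z hz => gcd_dvd_of_mem_kloostermanSolutions hQ
    (isUnit_inv_intCast_pow hs _) (isUnit_inv_intCast_pow hs' _) hz
  by_cases hdvd : (g : ℤ) ∣ n₂
  · have hgcd : Int.gcd (Int.gcd ((p : ℤ) ^ j) ((p : ℤ) ^ k)) n₂ = g := by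
      rw [← Nat.cast_pow, ← Nat.cast_pow, Int.gcd_natCast_natCast]
      exact_mod_cast Int.gcd_eq_left (Int.natCast_nonneg g) hdvd
    refine ⟨absurd hdvd, ?_⟩
    rw [hC, hgcd, norm_mul, Complex.norm_natCast, Nat.cast_pow]
    gcongr
    calc _ ≤ (#T : ℝ) := norm_sum_stdAddChar_mul_stdAddChar_le _ _ T
      _ ≤ g := mod_cast card_kloostermanSolutions_le_gcd_pow hp₀
        (isUnit_inv_intCast_pow hs j) (isUnit_inv_intCast_pow hs' k) _
  · have hC₀ : C = 0 := by
      rw [hC, eq_empty_of_forall_notMem fun z hz => hdvd (hT z hz), sum_empty, mul_zero]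
    exact ⟨fun _ => hC₀, by rw [hC₀, norm_zero]; positivity⟩

theorem character_sum_prime_power
    (p : ℕ) (hp : p.Prime) (j k : ℕ) (hj : 1 ≤ j) (hk : 1 ≤ k)
    (s s' m m' n₂ : ℤ)
    (hs : IsCoprime s (p : ℤ)) (hs' : IsCoprime s' (p : ℤ))
    (hm : IsCoprime m (p : ℤ)) (hm' : IsCoprime m' (p : ℤ))
    (C : ℂ)
    (hC : C = ∑ γ ∈ Finset.range (p ^ (j + k)),
      kloosterman (p ^ j) (((m : ZMod (p ^ j)))⁻¹ * ((s : ZMod (p ^ j)))⁻¹)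
        ((γ : ZMod (p ^ j)) * ((s : ZMod (p ^ j)))⁻¹)
      * kloosterman (p ^ k) (((m' : ZMod (p ^ k)))⁻¹ * ((s' : ZMod (p ^ k)))⁻¹)
        ((γ : ZMod (p ^ k)) * ((s' : ZMod (p ^ k)))⁻¹)
      * eAdd (((((s : ZMod (p ^ (j + k))))⁻¹ * ((s' : ZMod (p ^ (j + k))))⁻¹
          * (n₂ : ZMod (p ^ (j + k))) * (γ : ZMod (p ^ (j + k)))).val : ℝ) / (p ^ (j + k)))) :
    (¬ ((Nat.gcd (p ^ j) (p ^ k) : ℤ) ∣ n₂) → C = 0) ∧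
    ‖C‖ ≤ (p : ℝ) ^ (j + k) * (Int.gcd (Int.gcd ((p : ℤ) ^ j) ((p : ℤ) ^ k)) n₂) :=
  character_sum_prime_power_general p hp j k s s' m m' n₂ hs hs' C hC
end

section
/- Let q be a positive integer, n₁ | q, and m, m' integers coprime to q. For n₂ = 0, the character sum C = Σ_{γ mod q²/n₁²} S(m̄, γ; q/n₁) · S(m̄', γ; q/n₁) equals (q²/n₁²) · Σ*_{c mod q/n₁} e(c(m − m')/(q/n₁)). -/
open scoped BigOperators

/-!
Expanding both Kloosterman sums modulo `N = q/n₁`, the sum over `γ` of `e(γ(x̄ + ȳ)/N)` is `N`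
or `0` according as `y ≡ -x` or not, so each of the `N` full periods of `γ` contributes
`N · Σ*_x e(x(m̄ - m̄')/N)`. Finally `m̄ - m̄' = -m̄ m̄' (m - m')`, and `x ↦ -m̄ m̄' x` permutes the
units, which turns this Ramanujan sum into the one with `m - m'`.
-/

open Finset

theorem Units.val_inv_add_val_inv_eq_zero_iff {R : Type*} [Ring R] (u v : Rˣ) :
    (↑u⁻¹ + ↑v⁻¹ : R) = 0 ↔ v = -u := by
  rw [add_eq_zero_iff_eq_neg', ← Units.val_neg, Units.val_inj, ← _root_.inv_neg, inv_inj]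

theorem sum_units_mul_unit {R M : Type*} [Monoid R] [Fintype Rˣ] [AddCommMonoid M] (f : R → M)
    (c : R) (w : Rˣ) : ∑ u : Rˣ, f (u * w * c) = ∑ u : Rˣ, f (u * c) := by
  simpa only [Equiv.coe_mulRight, Units.val_mul] using
    Equiv.sum_comp (Equiv.mulRight w) fun u => f (u * c)

namespace AddChar

variable {R : Type*} [CommRing R] [Fintype R] [DecidableEq R] (ψ : AddChar R ℂ)

noncomputable def kloostermanSum (a b : R) : ℂ :=
  ∑ u : Rˣ, ψ (a * u + b * ↑u⁻¹)

theorem sum_kloostermanSum_mul_kloostermanSum (hψ : ψ.IsPrimitive) (a b : R) :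
    ∑ g, kloostermanSum ψ a g * kloostermanSum ψ b g =
      Fintype.card R * ∑ u : Rˣ, ψ (u * (a - b)) := by
  have orthogonality (u v : Rˣ) :
      ∑ g, ψ (a * u + g * ↑u⁻¹) * ψ (b * v + g * ↑v⁻¹) =
        ψ (a * u + b * v) * if v = -u then (Fintype.card R : ℂ) else 0 := by
    simp_rw [← map_add_eq_mul, show ∀ g : R, a * u + g * ↑u⁻¹ + (b * v + g * ↑v⁻¹) =
      a * u + b * v + g * (↑u⁻¹ + ↑v⁻¹) from fun g => by ring, map_add_eq_mul, ← mul_sum,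
      sum_mulShift _ hψ, Units.val_inv_add_val_inv_eq_zero_iff, Nat.cast_ite, Nat.cast_zero]
  simp_rw [kloostermanSum, sum_mul_sum, sum_comm (γ := R), orthogonality, mul_ite, mul_zero,
    sum_ite_eq', mem_univ, if_true, mul_sum]
  refine sum_congr rfl fun u _ => ?_
  rw [mul_comm, Units.val_neg]
  ring_nf

theorem sum_kloostermanSum_inv_mul_kloostermanSum_inv (hψ : ψ.IsPrimitive) (a b : Rˣ) :
    ∑ g, kloostermanSum ψ ↑a⁻¹ g * kloostermanSum ψ ↑b⁻¹ g =
      Fintype.card R * ∑ u : Rˣ, ψ (u * (a - b)) := by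
  have hdiff : (↑a⁻¹ - ↑b⁻¹ : R) = ↑(-(a⁻¹ * b⁻¹)) * (a - b) := by
    rw [Units.val_neg, Units.val_mul]
    linear_combination (↑b⁻¹ : R) * a.inv_mul - (↑a⁻¹ : R) * b.inv_mul
  simp_rw [sum_kloostermanSum_mul_kloostermanSum ψ hψ, hdiff, ← mul_assoc,
    sum_units_mul_unit (fun x => ψ x)]

end AddChar

namespace ZMod

variable {N : ℕ}

theorem isUnit_intCast_of_gcd_eq_one {q : ℕ} {m : ℤ} (hN : N ∣ q) (hm : Int.gcd m q = 1) :
    IsUnit (m : ZMod N) :=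
  (coe_int_isUnit_iff_isCoprime m N).mpr <| isCoprime_comm.mp <|
    (Int.isCoprime_iff_gcd_eq_one.mpr hm).of_isCoprime_of_dvd_right (Int.natCast_dvd_natCast.mpr hN)

variable [NeZero N] {M : Type*} [AddCommMonoid M]

theorem eAdd_val_div (x : ZMod N) : eAdd ((x.val : ℝ) / N) = stdAddChar x := by
  rw [stdAddChar_apply, toCircle_apply, eAdd]
  push_cast
  ring_nf

theorem sum_range_natCast (F : ZMod N → M) : ∑ γ ∈ range N, F γ = ∑ x, F x :=
  sum_nbij' (↑) val (fun _ _ => mem_univ _) (fun x _ => mem_range.mpr x.val_lt)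
    (fun _ h => val_cast_of_lt (mem_range.mp h)) (fun x _ => natCast_zmod_val x) fun _ _ => rfl

theorem sum_range_mul_natCast (k : ℕ) (F : ZMod N → M) :
    ∑ γ ∈ range (k * N), F γ = k • ∑ x, F x := by
  induction k with
  | zero => simp
  | succ k ih =>
    rw [Nat.succ_mul, sum_range_add, ih, succ_nsmul, ← sum_range_natCast]
    simp

theorem sum_units_eq_sum_filter_isUnit [DecidablePred (IsUnit : ZMod N → Prop)]
    (F : ZMod N → M) : ∑ u : (ZMod N)ˣ, F u = ∑ x with IsUnit x, F x := by
  refine (sum_map univ ⟨Units.val, Units.val_injective⟩ F).symm.trans (congrArg (Finset.sum · F) ?_)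
  ext x
  simp [IsUnit, eq_comm]

theorem sum_coprime_eq_sum_units (F : ZMod N → M) :
    ∑ x ∈ range N with x.Coprime N, F x = ∑ u : (ZMod N)ˣ, F u := by
  classical
  simp_rw [sum_units_eq_sum_filter_isUnit, sum_filter, ← isUnit_iff_coprime]
  exact sum_range_natCast fun x => if IsUnit x then F x else 0

theorem kloosterman_eq_kloostermanSum (a b : ZMod N) :
    kloosterman N a b = stdAddChar.kloostermanSum a b := by
  rw [kloosterman]
  simp_rw [eAdd_val_div]
  rw [sum_coprime_eq_sum_units fun x => stdAddChar (a * x + b * x⁻¹)]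
  simp_rw [inv_coe_unit, AddChar.kloostermanSum]

theorem sum_range_mul_kloosterman_mul_kloosterman (k : ℕ) {a b : ZMod N} (ha : IsUnit a)
    (hb : IsUnit b) :
    ∑ γ ∈ range (k * N), kloosterman N a⁻¹ γ * kloosterman N b⁻¹ γ =
      (k * N : ℕ) *
        ∑ c ∈ range N with c.Coprime N, eAdd (((c * (a - b) : ZMod N).val : ℝ) / N) := by
  obtain ⟨u, rfl⟩ := ha
  obtain ⟨v, rfl⟩ := hb
  simp_rw [kloosterman_eq_kloostermanSum, inv_coe_unit, eAdd_val_div]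
  rw [sum_range_mul_natCast k fun g => stdAddChar.kloostermanSum (↑u⁻¹ : ZMod N) g *
      stdAddChar.kloostermanSum (↑v⁻¹ : ZMod N) g,
    AddChar.sum_kloostermanSum_inv_mul_kloostermanSum_inv _ (isPrimitive_stdAddChar N),
    sum_coprime_eq_sum_units fun c => stdAddChar (c * ((u : ZMod N) - (v : ZMod N))), card,
    nsmul_eq_mul]
  push_cast
  ring

end ZMod

theorem character_sum_zero_frequency_general
    (q n₁ : ℕ) (hn₁ : n₁ ∣ q)
    (m m' : ℤ) (hm : Int.gcd m q = 1) (hm' : Int.gcd m' q = 1) :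
    ∑ γ ∈ Finset.range (q ^ 2 / n₁ ^ 2),
        kloosterman (q / n₁) ((m : ZMod (q / n₁)))⁻¹ (γ : ZMod (q / n₁))
        * kloosterman (q / n₁) ((m' : ZMod (q / n₁)))⁻¹ (γ : ZMod (q / n₁))
      = (q ^ 2 / n₁ ^ 2 : ℕ)
        * ∑ c ∈ Finset.filter (fun c => Nat.Coprime c (q / n₁)) (Finset.range (q / n₁)),
            eAdd (((((c : ZMod (q / n₁)) * ((m - m' : ℤ) : ZMod (q / n₁))).val : ℕ) : ℝ)
              / (q / n₁)) := by
  have hsq : q ^ 2 / n₁ ^ 2 = q / n₁ * (q / n₁) := by rw [← Nat.div_pow hn₁, sq]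
  rcases (q / n₁).eq_zero_or_pos with hN | hN
  · simp [hsq, hN]
  have : NeZero (q / n₁) := ⟨hN.ne'⟩
  have hcast : (q / n₁ : ℝ) = (q / n₁ : ℕ) :=
    (Nat.cast_div hn₁ (Nat.cast_ne_zero.mpr (Nat.div_pos_iff.mp hN).1.ne')).symm
  have hdvd : q / n₁ ∣ q := Nat.div_dvd_of_dvd hn₁
  rw [hsq, hcast, Int.cast_sub,
    ZMod.sum_range_mul_kloosterman_mul_kloosterman _ (ZMod.isUnit_intCast_of_gcd_eq_one hdvd hm)
      (ZMod.isUnit_intCast_of_gcd_eq_one hdvd hm')]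

theorem character_sum_zero_frequency
    (q n₁ : ℕ) (hq : 0 < q) (hn₁ : n₁ ∣ q)
    (m m' : ℤ) (hm : Int.gcd m q = 1) (hm' : Int.gcd m' q = 1) :
    ∑ γ ∈ Finset.range (q ^ 2 / n₁ ^ 2),
        kloosterman (q / n₁) ((m : ZMod (q / n₁)))⁻¹ (γ : ZMod (q / n₁))
        * kloosterman (q / n₁) ((m' : ZMod (q / n₁)))⁻¹ (γ : ZMod (q / n₁))
      = (q ^ 2 / n₁ ^ 2 : ℕ)
        * ∑ c ∈ Finset.filter (fun c => Nat.Coprime c (q / n₁)) (Finset.range (q / n₁)),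
            eAdd (((((c : ZMod (q / n₁)) * ((m - m' : ℤ) : ZMod (q / n₁))).val : ℕ) : ℝ)
              / (q / n₁)) :=
  character_sum_zero_frequency_general q n₁ hn₁ m m' hm hm'
end

section
/- Let C ≥ 1 and n₁ a positive integer. Then Σ_{q ∼ C} Σ_{|m|,|m'| ≤ M, m ≠ m'} gcd(m − m', q/n₁)^{1/2} · (q/n₁)^{1/2} · τ(q/n₁) ≪_ε M² · C^{3/2 + ε} · n₁^{-1/2}, where the q-sum runs over integers q in (C, 2C] divisible by n₁, τ is the divisor function, and M ≥ 1. -/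
/-!
Write d = q / n₁ ≤ N := 2C / n₁ and k = |m - m'| ≤ 2M. Each k arises from at most 2(2M + 1)
pairs (m, m'), and √d ≤ √N, so it suffices to bound ∑_{d ≤ N} ∑_{0 < k ≤ 2M} √gcd(k, d) τ(d).
Bounding √gcd(k, d) by the sum of √g over the common divisors g of k and d and interchanging
the sums gives at most ∑_g √g (2M / g) ∑_{d ≤ N, g ∣ d} τ(d). As τ(ge) ≤ τ(g) τ(e) and
∑_{e ≤ x} τ(e) ≤ x (1 + log x), the inner sum is at most τ(g) (N / g) (1 + log N), and
∑_g τ(g) g^{-3/2} ≤ ζ(3/2)². So the whole sum is ≪ M² N^{3/2} (1 + log N), where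
N^{3/2} ≤ (2C)^{3/2} n₁^{-3/2} and 1 + log N ≪_ε C^ε.
-/

open Finset Real

theorem Finset.sum_comp_le_mul_sum_of_card_fiber_le {α β R : Type*} [DecidableEq β]
    [CommSemiring R] [PartialOrder R] [IsOrderedRing R] {s : Finset α} {t : Finset β}
    {f : α → β} {g : β → R} (hf : ∀ a ∈ s, f a ∈ t) (n : ℕ)
    (hn : ∀ b ∈ t, #{a ∈ s | f a = b} ≤ n) (hg : ∀ b ∈ t, 0 ≤ g b) :
    ∑ a ∈ s, g (f a) ≤ n * ∑ b ∈ t, g b := by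
  calc ∑ a ∈ s, g (f a) = ∑ b ∈ t, ∑ a ∈ s with f a = b, g (f a) :=
        (sum_fiberwise_of_maps_to hf _).symm
    _ = ∑ b ∈ t, #{a ∈ s | f a = b} * g b := by
        refine sum_congr rfl fun b _ => ?_
        rw [sum_congr rfl fun a ha => congrArg g (mem_filter.1 ha).2, sum_const, nsmul_eq_mul]
    _ ≤ ∑ b ∈ t, n * g b :=
        sum_le_sum fun b hb => mul_le_mul_of_nonneg_right (Nat.mono_cast (hn b hb)) (hg b hb)
    _ = n * ∑ b ∈ t, g b := (mul_sum _ _ _).symm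

theorem sum_filter_dvd_comp_div_le {n : ℕ} (hn : 0 < n) (a c : ℕ) {G : ℕ → ℝ}
    (hG : ∀ d, 0 ≤ G d) :
    ∑ q ∈ Ioc a c with n ∣ q, G (q / n) ≤ ∑ d ∈ Ioc 0 (c / n), G d := by
  have maps_to : ∀ q ∈ {q ∈ Ioc a c | n ∣ q}, q / n ∈ Ioc 0 (c / n) := by
    simp only [mem_filter, mem_Ioc]
    rintro q ⟨⟨haq, hqc⟩, hnq⟩
    exact ⟨Nat.div_pos (Nat.le_of_dvd (by omega) hnq) hn, Nat.div_le_div_right hqc⟩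
  have fiber_le_one :
      ∀ d ∈ Ioc 0 (c / n), #{q ∈ {q ∈ Ioc a c | n ∣ q} | q / n = d} ≤ 1 := by
    refine fun d _ => card_le_one.2 fun q hq q' hq' => ?_
    simp only [mem_filter] at hq hq'
    exact (Nat.div_left_inj hq.1.2 hq'.1.2).1 (hq.2.trans hq'.2.symm)
  simpa using sum_comp_le_mul_sum_of_card_fiber_le (f := (· / n)) (g := G) maps_to 1
    fiber_le_one fun d _ => hG d

theorem Nat.divisors_eq_filter_Ioc_dvd {n E : ℕ} (hn : 0 < n) (hnE : n ≤ E) :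
    n.divisors = {b ∈ Ioc 0 E | b ∣ n} := by
  ext b
  simp only [Nat.mem_divisors, mem_filter, mem_Ioc]
  constructor
  · rintro ⟨hb, -⟩
    exact ⟨⟨Nat.pos_of_dvd_of_pos hb hn, (Nat.le_of_dvd hn hb).trans hnE⟩, hb⟩
  · rintro ⟨-, hb⟩
    exact ⟨hb, hn.ne'⟩

theorem Nat.card_divisors_mul_le (m n : ℕ) :
    #(m * n).divisors ≤ #m.divisors * #n.divisors := by
  rw [Nat.divisors_mul]
  exact card_mul_le

theorem sum_card_divisors_le (E : ℕ) :
    ∑ e ∈ Ioc 0 E, (#e.divisors : ℝ) ≤ E * (1 + log E) := by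
  calc ∑ e ∈ Ioc 0 E, (#e.divisors : ℝ)
        = ∑ e ∈ Ioc 0 E, ∑ b ∈ Ioc 0 E, if b ∣ e then (1 : ℝ) else 0 := by
        refine sum_congr rfl fun e he => ?_
        rw [sum_boole, Nat.divisors_eq_filter_Ioc_dvd (mem_Ioc.1 he).1 (mem_Ioc.1 he).2]
    _ = ∑ b ∈ Ioc 0 E, (#{e ∈ Ioc 0 E | b ∣ e} : ℝ) := by
        rw [sum_comm]
        simp only [sum_boole]
    _ ≤ ∑ b ∈ Ioc 0 E, (E : ℝ) / b := by
        refine sum_le_sum fun b _ => ?_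
        rw [Nat.Ioc_filter_dvd_card_eq_div]
        exact Nat.cast_div_le
    _ = E * harmonic E := by
        rw [harmonic_eq_sum_Icc, ← zero_add 1, Icc_add_one_left_eq_Ioc]
        push_cast
        simp only [mul_sum, div_eq_mul_inv]
    _ ≤ E * (1 + log E) := by gcongr; exact harmonic_le_one_add_log E

theorem sum_card_divisors_filter_dvd_le (N : ℕ) {g : ℕ} (hg : 0 < g) :
    ∑ d ∈ Ioc 0 N with g ∣ d, (#d.divisors : ℝ) ≤ #g.divisors * (N / g) * (1 + log N) := by
  have log_le : log (N / g : ℕ) ≤ log N := by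
    rcases (N / g).eq_zero_or_pos with h | h
    · rw [h, Nat.cast_zero, log_zero]
      exact log_natCast_nonneg N
    · exact log_le_log (by exact_mod_cast h) (by exact_mod_cast Nat.div_le_self N g)
  calc ∑ d ∈ Ioc 0 N with g ∣ d, (#d.divisors : ℝ)
        ≤ ∑ d ∈ Ioc 0 N with g ∣ d, (#g.divisors : ℝ) * #(d / g).divisors := by
        refine sum_le_sum fun d hd => ?_
        have h := Nat.card_divisors_mul_le g (d / g)
        rw [Nat.mul_div_cancel' (mem_filter.1 hd).2] at h
        exact_mod_cast h
    _ ≤ ∑ e ∈ Ioc 0 (N / g), (#g.divisors : ℝ) * #e.divisors :=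
        sum_filter_dvd_comp_div_le (G := fun e => (#g.divisors : ℝ) * #e.divisors) hg 0 N
          fun _ => by positivity
    _ ≤ #g.divisors * ((N / g : ℕ) * (1 + log (N / g : ℕ))) := by
        rw [← mul_sum]
        gcongr
        exact sum_card_divisors_le _
    _ ≤ #g.divisors * (N / g) * (1 + log N) := by
        rw [mul_assoc]
        gcongr
        exact Nat.cast_div_le

theorem sum_card_divisors_mul_rpow_inv_le (A : ℕ) {p : ℝ} (hp : 1 < p) :
    ∑ n ∈ Ioc 0 A, (#n.divisors : ℝ) * ((n : ℝ) ^ p)⁻¹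
      ≤ (∑' u : ℕ, ((u : ℝ) ^ p)⁻¹) ^ 2 := by
  set w : ℕ → ℝ := fun u => ((u : ℝ) ^ p)⁻¹
  have w_nonneg (u : ℕ) : 0 ≤ w u := by positivity
  have fiber_eq : ∀ n ∈ Ioc 0 A,
      {q ∈ Ioc 0 A ×ˢ Ioc 0 A | q.1 * q.2 = n} = n.divisorsAntidiagonal := by
    intro n hn
    rw [mem_Ioc] at hn
    ext ⟨u, v⟩
    simp only [mem_filter, mem_product, mem_Ioc, Nat.mem_divisorsAntidiagonal]
    constructor
    · rintro ⟨-, huv⟩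
      exact ⟨huv, hn.1.ne'⟩
    · rintro ⟨rfl, -⟩
      have hu := Nat.pos_of_mul_pos_right hn.1
      have hv := Nat.pos_of_mul_pos_left hn.1
      exact ⟨⟨⟨hu, (Nat.le_mul_of_pos_right u hv).trans hn.2⟩,
        ⟨hv, (Nat.le_mul_of_pos_left v hu).trans hn.2⟩⟩, rfl⟩
  calc ∑ n ∈ Ioc 0 A, (#n.divisors : ℝ) * w n
        = ∑ n ∈ Ioc 0 A, ∑ q ∈ Ioc 0 A ×ˢ Ioc 0 A with q.1 * q.2 = n, w q.1 * w q.2 := by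
        refine sum_congr rfl fun n hn => ?_
        have w_mul : ∀ q ∈ n.divisorsAntidiagonal, w q.1 * w q.2 = w n := fun q hq => by
          simp only [w, ← mul_inv, ← mul_rpow (Nat.cast_nonneg _) (Nat.cast_nonneg _),
            ← Nat.cast_mul, (Nat.mem_divisorsAntidiagonal.1 hq).1]
        rw [fiber_eq n hn, sum_congr rfl w_mul, sum_const, ← Nat.map_div_right_divisors,
          card_map, nsmul_eq_mul]
    _ ≤ ∑ q ∈ Ioc 0 A ×ˢ Ioc 0 A, w q.1 * w q.2 :=
        sum_fiberwise_le_sum_of_sum_fiber_nonneg fun _ _ =>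
          sum_nonneg fun q _ => mul_nonneg (w_nonneg _) (w_nonneg _)
    _ = (∑ u ∈ Ioc 0 A, w u) ^ 2 := by rw [sq, sum_mul_sum, sum_product]
    _ ≤ (∑' u, w u) ^ 2 := by
        gcongr
        exact (summable_nat_rpow_inv.2 hp).sum_le_tsum _ fun u _ => w_nonneg u

noncomputable def zetaThreeHalves : ℝ := ∑' u : ℕ, ((u : ℝ) ^ (3 / 2 : ℝ))⁻¹

theorem zetaThreeHalves_pos : 0 < zetaThreeHalves :=
  (summable_nat_rpow_inv.2 (by norm_num)).tsum_pos (fun _ => by positivity) 1 (by norm_num)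

theorem rpow_three_halves {x : ℝ} (hx : 0 ≤ x) : x ^ (3 / 2 : ℝ) = x * √x := by
  rw [show (3 / 2 : ℝ) = 1 + 1 / 2 by norm_num, rpow_add' hx (by norm_num), rpow_one,
    sqrt_eq_rpow]

theorem sqrt_gcd_le_sum_dvd {k d N : ℕ} (hd : 0 < d) (hdN : d ≤ N) :
    √(k.gcd d) ≤ ∑ g ∈ Ioc 0 N, (if g ∣ d then √g else 0) * (if g ∣ k then 1 else 0) := by
  have mem : k.gcd d ∈ Ioc 0 N :=
    mem_Ioc.2 ⟨Nat.gcd_pos_of_pos_right k hd, (Nat.gcd_le_right (m := k) (n := d) hd).trans hdN⟩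
  refine le_of_eq_of_le ?_ (single_le_sum (fun g _ => by positivity) mem)
  simp [Nat.gcd_dvd_left, Nat.gcd_dvd_right]

theorem sum_sum_sqrt_gcd_mul_card_divisors_le (A N : ℕ) :
    ∑ d ∈ Ioc 0 N, ∑ k ∈ Ioc 0 A, √(k.gcd d) * #d.divisors
      ≤ zetaThreeHalves ^ 2 * A * (N * (1 + log N)) := by
  calc ∑ d ∈ Ioc 0 N, ∑ k ∈ Ioc 0 A, √(k.gcd d) * #d.divisors
        ≤ ∑ d ∈ Ioc 0 N, ∑ k ∈ Ioc 0 A, ∑ g ∈ Ioc 0 N,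
            (if g ∣ d then √g * #d.divisors else 0) * (if g ∣ k then 1 else 0) := by
        refine sum_le_sum fun d hd => sum_le_sum fun k _ => ?_
        rw [mem_Ioc] at hd
        calc √(k.gcd d) * #d.divisors
            ≤ (∑ g ∈ Ioc 0 N, (if g ∣ d then √g else 0) * (if g ∣ k then 1 else 0)) *
                #d.divisors := by gcongr; exact sqrt_gcd_le_sum_dvd hd.1 hd.2
          _ = _ := by
            rw [sum_mul]
            refine sum_congr rfl fun g _ => ?_
            split_ifs <;> ring
    _ = ∑ g ∈ Ioc 0 N, (∑ d ∈ Ioc 0 N, if g ∣ d then √g * #d.divisors else 0) *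
          ∑ k ∈ Ioc 0 A, if g ∣ k then (1 : ℝ) else 0 := by
        simp only [sum_mul_sum]
        exact (sum_congr rfl fun d _ => sum_comm).trans sum_comm
    _ = ∑ g ∈ Ioc 0 N, √g * (∑ d ∈ Ioc 0 N with g ∣ d, (#d.divisors : ℝ)) *
          (A / g : ℕ) := by
        simp only [← sum_filter, ← mul_sum, sum_const, nsmul_eq_mul, mul_one,
          Nat.Ioc_filter_dvd_card_eq_div]
    _ ≤ ∑ g ∈ Ioc 0 N, √g * (#g.divisors * (N / g) * (1 + log N)) * (A / g) := by
        refine sum_le_sum fun g hg => ?_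
        gcongr
        · exact sum_card_divisors_filter_dvd_le N (mem_Ioc.1 hg).1
        · exact Nat.cast_div_le
    _ = A * (N * (1 + log N)) *
          ∑ g ∈ Ioc 0 N, (#g.divisors : ℝ) * ((g : ℝ) ^ (3 / 2 : ℝ))⁻¹ := by
        rw [mul_sum]
        refine sum_congr rfl fun g hg => ?_
        have hg : (0 : ℝ) < g := by exact_mod_cast (mem_Ioc.1 hg).1
        rw [rpow_three_halves hg.le]
        field_simp
        rw [sq_sqrt hg.le]
        ring
    _ ≤ A * (N * (1 + log N)) * zetaThreeHalves ^ 2 := by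
        gcongr
        exact sum_card_divisors_mul_rpow_inv_le N (by norm_num)
    _ = zetaThreeHalves ^ 2 * A * (N * (1 + log N)) := by ring

theorem sum_sum_erase_natAbs_sub_le (b : ℕ) {f : ℕ → ℝ} (hf : ∀ k, 0 ≤ f k) :
    ∑ m ∈ Icc (-(b : ℤ)) b, ∑ m' ∈ (Icc (-(b : ℤ)) b).erase m, f (m - m').natAbs
      ≤ (2 * b + 1) * (2 * ∑ k ∈ Ioc 0 (2 * b), f k) := by
  have inner : ∀ m ∈ Icc (-(b : ℤ)) b,
      ∑ m' ∈ (Icc (-(b : ℤ)) b).erase m, f (m - m').natAbs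
        ≤ (2 : ℕ) * ∑ k ∈ Ioc 0 (2 * b), f k := by
    intro m hm
    rw [mem_Icc] at hm
    refine sum_comp_le_mul_sum_of_card_fiber_le (f := fun m' => (m - m').natAbs) ?_ 2 ?_
      fun k _ => hf k
    · intro m' hm'
      simp only [mem_erase, mem_Icc] at hm'
      simp only [mem_Ioc]
      omega
    · intro k _
      refine (card_le_card (t := {m - k, m + k}) fun m' hm' => ?_).trans card_le_two
      simp only [mem_filter] at hm'
      simp only [mem_insert, mem_singleton]
      omega
  calc _ ≤ ∑ m ∈ Icc (-(b : ℤ)) b, (2 : ℕ) * ∑ k ∈ Ioc 0 (2 * b), f k := sum_le_sum inner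
    _ = (2 * b + 1) * (2 * ∑ k ∈ Ioc 0 (2 * b), f k) := by
        have card_eq : b + 1 - -(b : ℤ) = ((2 * b + 1 : ℕ) : ℤ) := by push_cast; ring
        rw [sum_const, Int.card_Icc, card_eq, Int.toNat_natCast, nsmul_eq_mul]
        push_cast
        ring

theorem sum_sum_sum_sqrt_gcd_sub_le (b N : ℕ) :
    ∑ d ∈ Ioc 0 N, ∑ m ∈ Icc (-(b : ℤ)) b, ∑ m' ∈ (Icc (-(b : ℤ)) b).erase m,
        √((m - m').gcd d) * √d * #d.divisors
      ≤ 4 * zetaThreeHalves ^ 2 * ((2 * b + 1) * b) * (N * √N * (1 + log N)) := by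
  calc _ ≤ ∑ d ∈ Ioc 0 N, (2 * b + 1) *
          (2 * ∑ k ∈ Ioc 0 (2 * b), √(k.gcd d) * √d * #d.divisors) :=
        sum_le_sum fun d _ => sum_sum_erase_natAbs_sub_le b fun k => by positivity
    _ ≤ ∑ d ∈ Ioc 0 N, (2 * b + 1) *
          (2 * ∑ k ∈ Ioc 0 (2 * b), √(k.gcd d) * √N * #d.divisors) := by
        gcongr with d hd
        exact_mod_cast (mem_Ioc.1 hd).2
    _ = 2 * (2 * b + 1) * √N *
          ∑ d ∈ Ioc 0 N, ∑ k ∈ Ioc 0 (2 * b), √(k.gcd d) * #d.divisors := by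
        simp only [mul_sum]
        refine sum_congr rfl fun d _ => sum_congr rfl fun k _ => by ring
    _ ≤ 2 * (2 * b + 1) * √N *
          (zetaThreeHalves ^ 2 * (2 * b : ℕ) * (N * (1 + log N))) := by
        gcongr
        exact sum_sum_sqrt_gcd_mul_card_divisors_le _ _
    _ = 4 * zetaThreeHalves ^ 2 * ((2 * b + 1) * b) * (N * √N * (1 + log N)) := by
        push_cast
        ring

theorem mul_sqrt_mul_one_add_log_le {N n : ℕ} {Y ε : ℝ} (hn : 0 < n) (hNY : (N * n : ℝ) ≤ Y)
    (hY : 1 ≤ Y) (hε : 0 < ε) :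
    N * √N * (1 + log N) ≤ (1 + ε⁻¹) * Y ^ (3 / 2 + ε) * (n : ℝ) ^ (-(1 : ℝ) / 2) := by
  rcases N.eq_zero_or_pos with rfl | hN
  · simp only [CharP.cast_eq_zero, zero_mul]
    positivity
  have hn' : (1 : ℝ) ≤ n := by exact_mod_cast hn
  have hN' : (1 : ℝ) ≤ N := by exact_mod_cast hN
  have power_le : N * √N ≤ Y ^ (3 / 2 : ℝ) * (n : ℝ) ^ (-(1 : ℝ) / 2) :=
    calc N * √N = (N * n : ℝ) ^ (3 / 2 : ℝ) * (n : ℝ) ^ (-(3 / 2 : ℝ)) := by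
          rw [mul_rpow (by positivity) (by positivity), mul_assoc, ← rpow_add (by positivity),
            add_neg_cancel, rpow_zero, mul_one, rpow_three_halves (by positivity)]
      _ ≤ Y ^ (3 / 2 : ℝ) * (n : ℝ) ^ (-(1 : ℝ) / 2) := by
          gcongr
          norm_num
  have log_le : 1 + log N ≤ (1 + ε⁻¹) * Y ^ ε := by
    have h1 : 1 ≤ Y ^ ε := one_le_rpow hY hε.le
    have h2 : log Y ≤ Y ^ ε / ε := log_le_rpow_div (by linarith) hε
    have h3 : log N ≤ log Y := log_le_log (by linarith) (by nlinarith)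
    calc 1 + log N ≤ Y ^ ε + Y ^ ε / ε := by linarith
      _ = (1 + ε⁻¹) * Y ^ ε := by ring
  calc N * √N * (1 + log N)
        ≤ Y ^ (3 / 2 : ℝ) * (n : ℝ) ^ (-(1 : ℝ) / 2) * ((1 + ε⁻¹) * Y ^ ε) := by
        gcongr
    _ = (1 + ε⁻¹) * Y ^ (3 / 2 + ε) * (n : ℝ) ^ (-(1 : ℝ) / 2) := by
        rw [rpow_add (by linarith)]
        ring

theorem gcd_divisor_sum_bound :
    ∀ ε : ℝ, 0 < ε → ∃ K : ℝ, 0 < K ∧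
      ∀ (C M : ℝ) (n₁ : ℕ), 1 ≤ C → 1 ≤ M → 0 < n₁ →
        ∑ q ∈ Finset.filter (fun q => n₁ ∣ q) (Finset.Ioc ⌊C⌋₊ ⌊2 * C⌋₊),
          ∑ m ∈ Finset.Icc (-(⌊M⌋ : ℤ)) ⌊M⌋,
            ∑ m' ∈ (Finset.Icc (-(⌊M⌋ : ℤ)) ⌊M⌋).erase m,
              ((Int.gcd (m - m') ((q / n₁ : ℕ) : ℤ) : ℝ)) ^ ((1 : ℝ) / 2)
                * ((q / n₁ : ℕ) : ℝ) ^ ((1 : ℝ) / 2)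
                * ((Nat.divisors (q / n₁)).card : ℝ)
          ≤ K * M ^ 2 * C ^ ((3 : ℝ) / 2 + ε) * (n₁ : ℝ) ^ (-(1 : ℝ) / 2) := by
  intro ε hε
  have hZ := zetaThreeHalves_pos
  refine ⟨12 * zetaThreeHalves ^ 2 * (1 + ε⁻¹) * 2 ^ ((3 : ℝ) / 2 + ε), by positivity, ?_⟩
  intro C M n₁ hC hM hn₁
  set b := ⌊M⌋₊
  set N := ⌊2 * C⌋₊ / n₁
  have hbM : (b : ℝ) ≤ M := Nat.floor_le (by linarith)
  have hNC : (N * n₁ : ℝ) ≤ 2 * C := by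
    rw [← Nat.cast_mul]
    exact (Nat.cast_le.2 (Nat.div_mul_le_self _ _)).trans (Nat.floor_le (by linarith))
  rw [← Int.natCast_floor_eq_floor (by linarith : 0 ≤ M)]
  simp only [← sqrt_eq_rpow]
  calc _ ≤ ∑ d ∈ Ioc 0 N, ∑ m ∈ Icc (-(b : ℤ)) b, ∑ m' ∈ (Icc (-(b : ℤ)) b).erase m,
          √((m - m').gcd d) * √d * #d.divisors :=
        sum_filter_dvd_comp_div_le hn₁ _ _ fun d => by positivity
    _ ≤ 4 * zetaThreeHalves ^ 2 * ((2 * b + 1) * b) * (N * √N * (1 + log N)) :=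
        sum_sum_sum_sqrt_gcd_sub_le b N
    _ ≤ 4 * zetaThreeHalves ^ 2 * (3 * M ^ 2) *
          ((1 + ε⁻¹) * (2 * C) ^ ((3 : ℝ) / 2 + ε) * (n₁ : ℝ) ^ (-(1 : ℝ) / 2)) := by
        gcongr 4 * zetaThreeHalves ^ 2 * ?_ * ?_
        · nlinarith
        · exact mul_sqrt_mul_one_add_log_le hn₁ hNC (by linarith) hε
    _ = _ := by
        rw [mul_rpow (by norm_num) (by linarith)]
        ring
end
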